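/- If b > 1/2, then there is a constant C (depending only on b) such that for all y ∈ ℝ, ∫_ℝ ⟨x⟩^{-2b} |x-y|^{-1/2} dx ≤ C ⟨y⟩^{-1/2}. -/

import Mathlib

open MeasureTheory

noncomputable def jb (x : ℝ) : ℝ := Real.sqrt (1 + x ^ 2)

open Set Metric

/-! For `∫ ⟨x⟩^{-s} |x - y|^{-a} dx` with `s > 1`, `0 ≤ a < 1` (here `s = 2b`, `a = 1/2`), split
the integral at `|x - y| = ⟨y⟩ / 2`. Near `y` the bracket is 1-Lipschitz, so
`⟨x⟩ ≥ ⟨y⟩ / 2` and the local piece is at most `(⟨y⟩/2)^{-s} ∫_{|u| ≤ ⟨y⟩/2} |u|^{-a} du`, of size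
`⟨y⟩^{1-a-s} ≤ ⟨y⟩^{-a}` because `s ≥ 1`. Away from `y` the singular factor is at most
`(⟨y⟩/2)^{-a}`, and `⟨x⟩^{-s}` is integrable because `s > 1`. -/

lemma jb_pos (x : ℝ) : 0 < jb x := Real.sqrt_pos.mpr (by positivity)

lemma one_le_jb (x : ℝ) : 1 ≤ jb x :=
  Real.one_le_sqrt.mpr (by nlinarith [sq_nonneg x])

lemma jb_le_jb_add_abs_sub (x y : ℝ) : jb y ≤ jb x + |x - y| := by
  have hsum : 0 ≤ jb x + |x - y| := add_nonneg (jb_pos x).le (abs_nonneg _)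
  rw [jb, Real.sqrt_le_left hsum]
  have hx : jb x ^ 2 = 1 + x ^ 2 := Real.sq_sqrt (by positivity)
  have hax : |x| ≤ jb x := Real.abs_le_sqrt (by nlinarith)
  have hcross : -(x * (x - y)) ≤ jb x * |x - y| := by
    calc -(x * (x - y)) ≤ |x| * |x - y| := by rw [← abs_mul]; exact neg_le_abs _
      _ ≤ jb x * |x - y| := mul_le_mul_of_nonneg_right hax (abs_nonneg _)
  nlinarith [sq_abs (x - y)]

lemma integrable_jb_rpow_neg {s : ℝ} (hs : 1 < s) : Integrable fun x : ℝ => jb x ^ (-s) := by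
  refine (integrable_rpow_neg_one_add_norm_sq (E := ℝ) (r := s) (by simpa using hs)).congr
    (Filter.Eventually.of_forall fun x => ?_)
  simp only [Real.norm_eq_abs, sq_abs, jb, Real.sqrt_eq_rpow]
  rw [← Real.rpow_mul (by positivity)]
  ring_nf

lemma integrable_indicator_closedBall_abs_rpow_neg {a : ℝ} (ha : a < 1) (r : ℝ) :
    Integrable ((closedBall (0 : ℝ) r).indicator fun u => |u| ^ (-a)) := by
  have hloc : LocallyIntegrable (fun u : ℝ => |u| ^ (-a)) :=
    locallyIntegrable_of_norm_le_rpow (μ := volume) (C := 1) (α := a) (by simp) (by simpa)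
      (Filter.Eventually.of_forall fun u => by
        rw [Real.norm_eq_abs, abs_of_nonneg (Real.rpow_nonneg (abs_nonneg u) _), one_mul,
          Real.norm_eq_abs])
      (continuous_abs.measurable.pow_const _).aestronglyMeasurable
  exact (integrable_indicator_iff measurableSet_closedBall).mpr
    (hloc.integrableOn_isCompact (isCompact_closedBall 0 r))

lemma integral_indicator_closedBall_abs_rpow_neg {a : ℝ} (ha : a < 1) {r : ℝ} (hr : 0 ≤ r) :
    ∫ u, (closedBall (0 : ℝ) r).indicator (fun u => |u| ^ (-a)) u =
      2 * (r ^ (1 - a) / (1 - a)) := by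
  have hcomp : ∀ u : ℝ, (closedBall (0 : ℝ) r).indicator (fun u => |u| ^ (-a)) u =
      (Iic r).indicator (fun t => t ^ (-a)) |u| := fun u => by
    simp only [indicator, mem_closedBall, dist_zero_right, Real.norm_eq_abs, mem_Iic]
  simp_rw [hcomp]
  rw [integral_comp_abs (f := (Iic r).indicator fun t => t ^ (-a)),
    setIntegral_indicator measurableSet_Iic, Ioi_inter_Iic,
    ← intervalIntegral.integral_of_le hr, integral_rpow (Or.inl (by linarith)),
    show -a + 1 = 1 - a by ring, Real.zero_rpow (by linarith), sub_zero]

lemma rpow_neg_mul_rpow_one_sub_le {ρ s a : ℝ} (hρ : 1 / 2 ≤ ρ) (hs : 1 ≤ s) :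
    ρ ^ (-s) * ρ ^ (1 - a) ≤ 2 ^ (s - 1) * ρ ^ (-a) := by
  have hρ0 : 0 < ρ := by linarith
  have hsplit : ρ ^ (-s) * ρ ^ (1 - a) = ρ ^ (1 - s) * ρ ^ (-a) := by
    rw [← Real.rpow_add hρ0, ← Real.rpow_add hρ0]
    ring_nf
  have hhalf : ρ ^ (1 - s) ≤ 2 ^ (s - 1) := by
    calc ρ ^ (1 - s) ≤ (1 / 2) ^ (1 - s) :=
          Real.rpow_le_rpow_of_nonpos (by norm_num) hρ (by linarith)
      _ = 2 ^ (s - 1) := by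
          rw [one_div, Real.inv_rpow zero_le_two, ← Real.rpow_neg zero_le_two, neg_sub]
  rw [hsplit]
  exact mul_le_mul_of_nonneg_right hhalf (Real.rpow_nonneg hρ0.le _)

lemma jb_rpow_mul_abs_sub_rpow_le {s a : ℝ} (hs : 0 ≤ s) (ha : 0 ≤ a) (x y : ℝ) :
    jb x ^ (-s) * |x - y| ^ (-a) ≤
      (jb y / 2) ^ (-s) * (closedBall (0 : ℝ) (jb y / 2)).indicator (fun u => |u| ^ (-a)) (x - y) +
        (jb y / 2) ^ (-a) * jb x ^ (-s) := by
  set ρ := jb y / 2 with hρ_def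
  have hρ : 0 < ρ := half_pos (jb_pos y)
  rcases le_or_gt |x - y| ρ with hnear | hfar
  · have hjx : ρ ≤ jb x := by linarith [jb_le_jb_add_abs_sub x y]
    have hweight : jb x ^ (-s) ≤ ρ ^ (-s) := Real.rpow_le_rpow_of_nonpos hρ hjx (by linarith)
    have hfar_nonneg : 0 ≤ ρ ^ (-a) * jb x ^ (-s) :=
      mul_nonneg (Real.rpow_nonneg hρ.le _) (Real.rpow_nonneg (jb_pos x).le _)
    rw [indicator_of_mem (by rwa [mem_closedBall, dist_zero_right, Real.norm_eq_abs])]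
    exact (mul_le_mul_of_nonneg_right hweight (Real.rpow_nonneg (abs_nonneg _) _)).trans
      (le_add_of_nonneg_right hfar_nonneg)
  · have hsing : |x - y| ^ (-a) ≤ ρ ^ (-a) :=
      Real.rpow_le_rpow_of_nonpos hρ hfar.le (by linarith)
    have hnear_nonneg : 0 ≤ ρ ^ (-s) * (closedBall 0 ρ).indicator (fun u => |u| ^ (-a)) (x - y) :=
      mul_nonneg (Real.rpow_nonneg hρ.le _)
        (indicator_nonneg (fun u _ => Real.rpow_nonneg (abs_nonneg u) _) _)
    calc jb x ^ (-s) * |x - y| ^ (-a) ≤ ρ ^ (-a) * jb x ^ (-s) := by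
          rw [mul_comm]; exact mul_le_mul_of_nonneg_right hsing (Real.rpow_nonneg (jb_pos x).le _)
      _ ≤ _ := le_add_of_nonneg_left hnear_nonneg

theorem exists_integral_jb_rpow_mul_abs_sub_rpow_le {s a : ℝ} (hs : 1 < s) (ha₀ : 0 ≤ a)
    (ha₁ : a < 1) :
    ∃ C : ℝ, 0 < C ∧ ∀ y : ℝ, ∫ x, jb x ^ (-s) * |x - y| ^ (-a) ≤ C * jb y ^ (-a) := by
  set A := ∫ x, jb x ^ (-s)
  have hA : 0 ≤ A := integral_nonneg fun x => Real.rpow_nonneg (jb_pos x).le _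
  refine ⟨2 ^ a * (2 ^ s / (1 - a) + A), by positivity, fun y => ?_⟩
  set ρ := jb y / 2 with hρ_def
  have hρ : 1 / 2 ≤ ρ := by linarith [one_le_jb y]
  have hnear := ((integrable_indicator_closedBall_abs_rpow_neg ha₁ ρ).comp_sub_right y).const_mul
    (ρ ^ (-s))
  have hfar := (integrable_jb_rpow_neg hs).const_mul (ρ ^ (-a))
  calc ∫ x, jb x ^ (-s) * |x - y| ^ (-a)
      ≤ ∫ x, (ρ ^ (-s) * (closedBall 0 ρ).indicator (fun u => |u| ^ (-a)) (x - y) +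
          ρ ^ (-a) * jb x ^ (-s)) :=
        integral_mono_of_nonneg
          (Filter.Eventually.of_forall fun x =>
            mul_nonneg (Real.rpow_nonneg (jb_pos x).le _) (Real.rpow_nonneg (abs_nonneg _) _))
          (hnear.add hfar)
          (Filter.Eventually.of_forall fun x => jb_rpow_mul_abs_sub_rpow_le (by linarith) ha₀ x y)
    _ = ρ ^ (-s) * (2 * (ρ ^ (1 - a) / (1 - a))) + ρ ^ (-a) * A := by
        rw [integral_add hnear hfar, integral_const_mul, integral_const_mul,
          integral_sub_right_eq_self (fun u => (closedBall 0 ρ).indicator (fun u => |u| ^ (-a)) u),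
          integral_indicator_closedBall_abs_rpow_neg ha₁ (by linarith)]
    _ ≤ ρ ^ (-a) * (2 ^ s / (1 - a) + A) := by
        have hmain := rpow_neg_mul_rpow_one_sub_le (a := a) hρ hs.le
        have h2s : (2 : ℝ) * 2 ^ (s - 1) = 2 ^ s := by
          rw [← Real.rpow_one_add' zero_le_two (by linarith)]; ring_nf
        have hnear_eq : ρ ^ (-s) * (2 * (ρ ^ (1 - a) / (1 - a))) =
            2 / (1 - a) * (ρ ^ (-s) * ρ ^ (1 - a)) := by ring
        have hbound_eq : ρ ^ (-a) * (2 ^ s / (1 - a)) = 2 / (1 - a) * (2 ^ (s - 1) * ρ ^ (-a)) := by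
          rw [← h2s]; ring
        rw [mul_add, hnear_eq, hbound_eq]
        exact add_le_add_left (mul_le_mul_of_nonneg_left hmain (by positivity)) _
    _ = 2 ^ a * (2 ^ s / (1 - a) + A) * jb y ^ (-a) := by
        rw [Real.div_rpow (jb_pos y).le zero_le_two, Real.rpow_neg zero_le_two, div_inv_eq_mul]
        ring

theorem stmt_4 (b : ℝ) (hb : 1 / 2 < b) :
    ∃ C : ℝ, 0 < C ∧
      ∀ y : ℝ,
        ∫ x : ℝ, jb x ^ (-(2 * b)) * |x - y| ^ (-(1 : ℝ) / 2) ≤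
          C * jb y ^ (-(1 : ℝ) / 2) := by
  rw [neg_div]
  exact exists_integral_jb_rpow_mul_abs_sub_rpow_le (by linarith) (by norm_num) (by norm_num)
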